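/- For every k ≥ 1, every γ ∈ (0,1], and every h ∈ Δ_k, let q = Π(h/γ) and let m = #{j ∈ {1,…,k} : q_j > 0} be the number of nonzero coordinates of q. Then for every index i with q_i = 0, it holds that h_i ≤ (1 − γ)/m. -/

import Mathlib

open scoped BigOperators

/-- The probability simplex in `ℝ^k`. -/
def simplex (k : ℕ) : Set (EuclideanSpace ℝ (Fin k)) :=
  {p | (∀ i, 0 ≤ p i) ∧ ∑ i, p i = 1}

/-- `q` is the Euclidean (L2) metric projection of `x` onto the probability simplex. -/
def IsL2ProjOnSimplex (k : ℕ) (x q : EuclideanSpace ℝ (Fin k)) : Prop :=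
  q ∈ simplex k ∧ ∀ r ∈ simplex k, ‖q - x‖ ≤ ‖r - x‖

/-!
Write `x = h / γ` and `S` for the support of `q = Π x`. The variational inequality of the
projection, tested against the point obtained from `q` by moving the mass `q j` of a support
coordinate `j` to a coordinate `i`, gives `x i - q i ≤ x j - q j`. For `q i = 0`, summing over
`j ∈ S` yields `m x i + 1 ≤ ∑_{j ∈ S} x j ≤ 1 / γ` because `h` is a probability vector, and
multiplying by `γ` gives `m h i ≤ 1 - γ`.
-/

open Finset

section Simplex

variable {k : ℕ} {p : EuclideanSpace ℝ (Fin k)}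

lemma convex_simplex (k : ℕ) : Convex ℝ (simplex k) := by
  intro p hp r hr a b ha hb hab
  simp only [simplex, Set.mem_ofPred_eq, PiLp.add_apply, PiLp.smul_apply, smul_eq_mul]
  refine ⟨fun i => by nlinarith [hp.1 i, hr.1 i], ?_⟩
  rw [sum_add_distrib, ← mul_sum, ← mul_sum, hp.2, hr.2]
  linarith

lemma sum_filter_pos_eq_one (hp : p ∈ simplex k) : ∑ j ∈ univ.filter (0 < p ·), p j = 1 := by
  rw [sum_filter_of_ne fun j _ hj => (hp.1 j).lt_of_ne' hj, hp.2]

lemma card_filter_pos_pos (hp : p ∈ simplex k) : 0 < (univ.filter (0 < p ·)).card := by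
  refine card_pos.mpr (nonempty_iff_ne_empty.mpr fun hS => ?_)
  simpa [hS] using sum_filter_pos_eq_one hp

lemma add_smul_single_sub_single_mem_simplex (hp : p ∈ simplex k) (i j : Fin k) :
    p + p j • (EuclideanSpace.single i 1 - EuclideanSpace.single j 1) ∈ simplex k := by
  have hcoord : ∀ t, (p + p j • (EuclideanSpace.single i 1 - EuclideanSpace.single j 1) :
      EuclideanSpace ℝ (Fin k)) t =
      p t + p j * ((if t = i then 1 else 0) - if t = j then 1 else 0) := fun t => by
    simp [PiLp.single_apply]
  refine ⟨fun t => ?_, ?_⟩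
  · rw [hcoord]
    have := hp.1 t
    have := hp.1 j
    split_ifs with hti htj htj <;> subst_vars <;> linarith
  · simp only [hcoord, sum_add_distrib, ← mul_sum, sum_sub_distrib, sum_ite_eq', mem_univ,
      if_true, sub_self, mul_zero, add_zero, hp.2]

end Simplex

namespace IsL2ProjOnSimplex

variable {k : ℕ} {x q : EuclideanSpace ℝ (Fin k)}

lemma inner_sub_nonpos (hq : IsL2ProjOnSimplex k x q) {w : EuclideanSpace ℝ (Fin k)}
    (hw : w ∈ simplex k) : inner ℝ (x - q) (w - q) ≤ 0 := by
  have : Nonempty (simplex k) := ⟨⟨q, hq.1⟩⟩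
  have hbdd : BddBelow (Set.range fun w : simplex k => ‖x - (w : EuclideanSpace ℝ (Fin k))‖) :=
    ⟨0, by rintro _ ⟨w, rfl⟩; exact norm_nonneg _⟩
  have hinf : ‖x - q‖ = ⨅ w : simplex k, ‖x - (w : EuclideanSpace ℝ (Fin k))‖ := by
    refine le_antisymm (le_ciInf fun w => ?_) (ciInf_le hbdd ⟨q, hq.1⟩)
    rw [norm_sub_rev, norm_sub_rev x]
    exact hq.2 w w.2
  exact (norm_eq_iInf_iff_real_inner_le_zero (convex_simplex k) hq.1).mp hinf w hw

lemma sub_apply_le_of_pos (hq : IsL2ProjOnSimplex k x q) (i : Fin k) {j : Fin k}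
    (hj : 0 < q j) : x i - q i ≤ x j - q j := by
  have hvi := hq.inner_sub_nonpos (add_smul_single_sub_single_mem_simplex hq.1 i j)
  rw [add_sub_cancel_left, real_inner_smul_right, inner_sub_right, real_inner_comm,
    EuclideanSpace.inner_single_left, real_inner_comm, EuclideanSpace.inner_single_left] at hvi
  simp only [map_one, one_mul, PiLp.sub_apply] at hvi
  nlinarith

lemma card_mul_add_one_le (hq : IsL2ProjOnSimplex k x q) {i : Fin k} (hi : q i = 0) :
    (univ.filter (0 < q ·)).card * x i + 1 ≤ ∑ j ∈ univ.filter (0 < q ·), x j := by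
  have hsum := sum_le_sum fun j (hj : j ∈ univ.filter (0 < q ·)) =>
    hq.sub_apply_le_of_pos i (mem_filter.mp hj).2
  simp only [hi, sub_zero, sum_const, nsmul_eq_mul, sum_sub_distrib,
    sum_filter_pos_eq_one hq.1] at hsum
  linarith

end IsL2ProjOnSimplex

theorem stmt_9_general (k : ℕ) (γ : ℝ) (hγ : γ ∈ Set.Ioc (0 : ℝ) 1)
    (h : EuclideanSpace ℝ (Fin k)) (hh : h ∈ simplex k)
    (q : EuclideanSpace ℝ (Fin k)) (hq : IsL2ProjOnSimplex k (γ⁻¹ • h) q)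
    (m : ℕ) (hm : m = (Finset.univ.filter fun j => 0 < q j).card) :
    ∀ i, q i = 0 → h i ≤ (1 - γ) / (m : ℝ) := by
  intro i hqi
  have hγ0 : 0 < γ := hγ.1
  have hm0 : 0 < (m : ℝ) := by
    rw [hm]
    exact_mod_cast card_filter_pos_pos hq.1
  have hsupp : ∑ j ∈ univ.filter (0 < q ·), h j ≤ 1 :=
    hh.2 ▸ sum_le_sum_of_subset_of_nonneg (subset_univ _) fun j _ _ => hh.1 j
  have key := hq.card_mul_add_one_le hqi
  simp only [PiLp.smul_apply, smul_eq_mul, ← mul_sum, ← hm] at key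
  have hscaled : m * h i + γ ≤ ∑ j ∈ univ.filter (0 < q ·), h j := by
    refine le_of_mul_le_mul_left ?_ (inv_pos.mpr hγ0)
    calc γ⁻¹ * (m * h i + γ) = m * (γ⁻¹ * h i) + 1 := by field_simp
      _ ≤ _ := key
  rw [le_div_iff₀ hm0]
  linarith

/-- for `γ ∈ (0,1]`, `h ∈ Δ_k`, `q = Π(h/γ)` and `m` the number of nonzero
coordinates of `q`: every index `i` with `q i = 0` satisfies `h i ≤ (1 − γ)/m`. -/
theorem stmt_9 (k : ℕ) (hk : 1 ≤ k) (γ : ℝ) (hγ : γ ∈ Set.Ioc (0 : ℝ) 1)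
    (h : EuclideanSpace ℝ (Fin k)) (hh : h ∈ simplex k)
    (q : EuclideanSpace ℝ (Fin k)) (hq : IsL2ProjOnSimplex k (γ⁻¹ • h) q)
    (m : ℕ) (hm : m = (Finset.univ.filter fun j => 0 < q j).card) :
    ∀ i, q i = 0 → h i ≤ (1 - γ) / (m : ℝ) :=
  stmt_9_general k γ hγ h hh q hq m hm
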